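/- arXiv:2206.08648 — 4 statements merged into one kernel-verified Lean document; each statement's English description precedes it below -/
import Mathlib

section
/- For every ν ∈ ℕ₀, every m ∈ ℤ and every t ∈ ℝ, the Matérn–Laguerre function satisfies the uniform bound |ψ_{m,ν}(t)| ≤ 2^ν ν! / √((2ν)!). -/
open Real Finset

/-- The `m`-th Laguerre polynomial `L_m(x) = ∑_{k=0}^m C(m,k)(−1)^k x^k/k!`. -/
noncomputable def lagPoly (m : ℕ) (x : ℝ) : ℝ :=
  ∑ k ∈ Finset.range (m + 1), (Nat.choose m k : ℝ) * (-1) ^ k / (Nat.factorial k : ℝ) * x ^ k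

/-- The Laguerre functions `φ_m`, `m ∈ ℤ`. -/
noncomputable def lagFun (m : ℤ) (t : ℝ) : ℝ :=
  if 0 ≤ m then
    Set.indicator (Set.Ici (0 : ℝ))
      (fun s => Real.sqrt 2 * lagPoly m.toNat (2 * s) * Real.exp (-s)) t
  else
    Set.indicator (Set.Iio (0 : ℝ))
      (fun s => -(Real.sqrt 2 * lagPoly (-m - 1).toNat (-(2 * s)) * Real.exp s)) t

/-- The Matérn–Laguerre function `ψ_{m,ν}`. -/
noncomputable def maternLag (ν : ℕ) (m : ℤ) (t : ℝ) : ℝ :=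
  (1 / Real.sqrt 2) * ((Nat.factorial ν : ℝ) / Real.sqrt (Nat.factorial (2 * ν))) *
    ∑ k ∈ Finset.range (ν + 2),
      (Nat.choose (ν + 1) k : ℝ) * (-1) ^ k * lagFun (m + (k : ℤ)) t

/-!
The Laguerre polynomials have the generating function `∑ Lₙ(x) zⁿ = (1 - z)⁻¹ exp(-xz/(1 - z))`
on the unit disc. Hence, for `x ≥ 0`, the alternating binomial sum
`∑ₖ (-1)ᵏ C(ν+1,k) L_{m+k}(x)` (with `L_j = 0` for `j < 0`) is the mean over the circle `|z| = r`
of `z^{-m} (1 - 1/z)^{ν+1} (1 - z)⁻¹ exp(-xz/(1 - z))`. On that circle `Re (z/(1 - z)) ≥ -1/2`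
and `|1 - z| ≤ 1 + r`, so the integrand is at most `r^{-(m+ν+1)} (1 + r)^ν e^{x/2}`, and letting
`r → 1` bounds the sum by `2^ν e^{x/2}`. For `t ≥ 0` the factor `e^{-t}` of `φ_m(t)` cancels
`e^{x/2}` at `x = 2t`; for `t < 0` the reflection `φ_m(t) = -φ_{-m-1}(-t)` reduces to `t ≥ 0`.
-/

section GeometricChoose

variable {𝕜 : Type*} [NormedField 𝕜] [HasSummableGeomSeries 𝕜]

theorem hasSum_choose_mul_pow (k : ℕ) {z : 𝕜} (hz : ‖z‖ < 1) :
    HasSum (fun n : ℕ => (n.choose k : 𝕜) * z ^ n) (z ^ k * (1 - z)⁻¹ ^ (k + 1)) := by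
  have hshift : HasSum (fun n : ℕ => ((n + k).choose k : 𝕜) * z ^ (n + k))
      (z ^ k * (1 - z)⁻¹ ^ (k + 1)) := by
    rw [← Ring.inverse_eq_inv']
    exact ((hasSum_choose_mul_geometric_of_norm_lt_one' k hz).mul_left (z ^ k)).congr_fun
      fun n => by ring
  rw [hasSum_nat_add_iff (f := fun n : ℕ => (n.choose k : 𝕜) * z ^ n) k] at hshift
  have hlow : ∑ i ∈ range k, (i.choose k : 𝕜) * z ^ i = 0 :=
    sum_eq_zero fun i hi => by simp [Nat.choose_eq_zero_of_lt (mem_range.mp hi)]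
  rwa [hlow, add_zero] at hshift

end GeometricChoose

section LaguerreGeneratingFunction

variable {𝕜 : Type*} [RCLike 𝕜]

/-- The term `C(n,k) (-x)ᵏ/k! zⁿ`, indexed by `p = (k, n)`, of `∑ₙ Lₙ(x) zⁿ`. -/
noncomputable def lagDoubleTerm (x z : 𝕜) (p : ℕ × ℕ) : 𝕜 :=
  (p.2.choose p.1 : 𝕜) * (-x) ^ p.1 / (p.1.factorial : 𝕜) * z ^ p.2

theorem hasSum_lagDoubleTerm_fiber (x : 𝕜) {z : 𝕜} (hz : ‖z‖ < 1) (k : ℕ) :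
    HasSum (fun n => lagDoubleTerm x z (k, n))
      ((1 - z)⁻¹ * ((-x * z * (1 - z)⁻¹) ^ k / (k.factorial : 𝕜))) := by
  rw [show (1 - z)⁻¹ * ((-x * z * (1 - z)⁻¹) ^ k / (k.factorial : 𝕜))
      = (-x) ^ k / (k.factorial : 𝕜) * (z ^ k * (1 - z)⁻¹ ^ (k + 1)) by ring]
  exact ((hasSum_choose_mul_pow k hz).mul_left _).congr_fun fun n => by
    simp only [lagDoubleTerm]
    ring

theorem norm_lagDoubleTerm (x z : 𝕜) (p : ℕ × ℕ) :
    ‖lagDoubleTerm x z p‖ = lagDoubleTerm (-‖x‖) ‖z‖ p := by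
  simp [lagDoubleTerm, norm_mul, norm_div, norm_pow]

theorem summable_norm_lagDoubleTerm (x : 𝕜) {z : 𝕜} (hz : ‖z‖ < 1) :
    Summable fun p => ‖lagDoubleTerm x z p‖ := by
  have hz' : ‖‖z‖‖ < 1 := by rwa [norm_norm]
  simp_rw [norm_lagDoubleTerm]
  refine (summable_prod_of_nonneg fun p => by simp only [lagDoubleTerm, neg_neg]; positivity).2
    ⟨fun k => (hasSum_lagDoubleTerm_fiber _ hz' k).summable, ?_⟩
  simp_rw [(hasSum_lagDoubleTerm_fiber _ hz' _).tsum_eq]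
  exact (Real.summable_pow_div_factorial _).mul_left _

theorem hasSum_lagDoubleTerm_lagPoly (x : ℝ) (z : 𝕜) (n : ℕ) :
    HasSum (fun k => lagDoubleTerm (x : 𝕜) z (k, n)) ((lagPoly n x : 𝕜) * z ^ n) := by
  have hvanish : ∀ k ∉ range (n + 1), lagDoubleTerm (x : 𝕜) z (k, n) = 0 := fun k hk => by
    simp [lagDoubleTerm, Nat.choose_eq_zero_of_lt (by simpa using hk : n < k)]
  convert hasSum_sum_of_ne_finset_zero (L := SummationFilter.unconditional ℕ) hvanish using 1
  simp only [lagDoubleTerm, lagPoly]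
  push_cast
  rw [sum_mul]
  exact sum_congr rfl fun k _ => by ring

theorem summable_norm_lagPoly_mul_pow (x : ℝ) {z : 𝕜} (hz : ‖z‖ < 1) :
    Summable fun n => ‖(lagPoly n x : 𝕜) * z ^ n‖ := by
  have hnorm := (summable_norm_lagDoubleTerm (x : 𝕜) hz).prod_symm
  refine Summable.of_nonneg_of_le (fun _ => norm_nonneg _) (fun n => ?_) hnorm.prod
  rw [← (hasSum_lagDoubleTerm_lagPoly x z n).tsum_eq]
  exact norm_tsum_le_tsum_norm (hnorm.prod_factor n)

end LaguerreGeneratingFunction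

noncomputable def lagGenFun (x : ℝ) (z : ℂ) : ℂ :=
  (1 - z)⁻¹ * Complex.exp (-(x : ℂ) * z * (1 - z)⁻¹)

theorem hasSum_lagPoly_mul_pow (x : ℝ) {z : ℂ} (hz : ‖z‖ < 1) :
    HasSum (fun n => (lagPoly n x : ℂ) * z ^ n) (lagGenFun x z) := by
  have hsum := (summable_norm_lagDoubleTerm (x : ℂ) hz).of_norm
  have hexp : HasSum (fun k => (1 - z)⁻¹ * ((-(x : ℂ) * z * (1 - z)⁻¹) ^ k / (k.factorial : ℂ)))
      (lagGenFun x z) := by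
    have hw : HasSum (fun k => (-(x : ℂ) * z * (1 - z)⁻¹) ^ k / (k.factorial : ℂ))
        (Complex.exp (-(x : ℂ) * z * (1 - z)⁻¹)) := by
      rw [Complex.exp_eq_exp_ℂ]
      exact NormedSpace.expSeries_div_hasSum_exp _
    exact hw.mul_left _
  have hfib : HasSum (fun k => (1 - z)⁻¹ * ((-(x : ℂ) * z * (1 - z)⁻¹) ^ k / (k.factorial : ℂ)))
      (∑' p, lagDoubleTerm (x : ℂ) z p) :=
    hsum.hasSum.prod_fiberwise (hasSum_lagDoubleTerm_fiber _ hz)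
  have hswap : HasSum (fun p : ℕ × ℕ => lagDoubleTerm (x : ℂ) z p.swap) (lagGenFun x z) := by
    rw [hexp.unique hfib]
    exact (Equiv.prodComm ℕ ℕ).hasSum_iff.2 hsum.hasSum
  exact hswap.prod_fiberwise (hasSum_lagDoubleTerm_lagPoly x z)

section AltBinomSum

variable {R : Type*} [CommRing R]

/-- `(-1)ⁿ (Δⁿ f)(m)`, with `Δ` the forward difference. -/
noncomputable def altBinomSum (n : ℕ) (f : ℤ → R) (m : ℤ) : R :=
  ∑ k ∈ range (n + 1), (n.choose k : R) * (-1) ^ k * f (m + k)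

theorem altBinomSum_const_mul (n : ℕ) (c : R) (f : ℤ → R) (m : ℤ) :
    altBinomSum n (fun j => c * f j) m = c * altBinomSum n f m := by
  simp only [altBinomSum, mul_sum]
  exact sum_congr rfl fun k _ => by ring

theorem altBinomSum_comp_neg_sub_one (n : ℕ) (f : ℤ → R) (m : ℤ) :
    altBinomSum n (fun j => f (-j - 1)) m = (-1) ^ n * altBinomSum n f (-m - n - 1) := by
  rw [altBinomSum, altBinomSum, ← sum_range_reflect, mul_sum]
  refine sum_congr rfl fun k hk => ?_
  obtain ⟨d, rfl⟩ := Nat.exists_eq_add_of_le (mem_range_succ_iff.mp hk)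
  have hsign : (-1 : R) ^ d = (-1) ^ (k + d) * (-1) ^ k := by
    rw [pow_add, mul_right_comm, ← pow_add, Even.neg_one_pow ⟨k, rfl⟩, one_mul]
  rw [show k + d + 1 - 1 - k = d by omega, Nat.choose_symm_add, hsign]
  push_cast
  ring_nf

theorem one_sub_pow_eq_sum (w : R) (n : ℕ) :
    (1 - w) ^ n = ∑ k ∈ range (n + 1), (n.choose k : R) * (-1) ^ k * w ^ k := by
  rw [sub_eq_neg_add, add_pow]
  exact sum_congr rfl fun k _ => by rw [neg_pow]; ring

end AltBinomSum

section CircleCoefficients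

open MeasureTheory

variable {a : ℕ → ℂ} {g : ℂ → ℂ} {r : ℝ}

theorem integral_circleMap_zpow (hr : r ≠ 0) (j : ℤ) :
    ∫ θ in (0)..(2 * π), circleMap 0 r θ ^ j = if j = 0 then (2 * π : ℂ) else 0 := by
  split_ifs with hj
  · simp [hj]
  · have h := circleIntegral.integral_sub_zpow_of_ne (n := j - 1) (by omega) 0 0 r
    have hcomb : ∀ θ : ℝ, circleMap 0 r θ * Complex.I * circleMap 0 r θ ^ (j - 1)
        = Complex.I * circleMap 0 r θ ^ j := fun θ => by
      rw [mul_comm _ Complex.I, mul_assoc, ← zpow_one_add₀ (circleMap_ne_center hr)]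
      ring_nf
    simp only [circleIntegral, deriv_circleMap, sub_zero, smul_eq_mul, hcomb,
      intervalIntegral.integral_const_mul] at h
    exact (mul_eq_zero.mp h).resolve_left Complex.I_ne_zero

theorem continuous_comp_circleMap_of_hasSum (hr : 0 ≤ r)
    (ha : Summable fun n => ‖a n‖ * r ^ n)
    (hg : ∀ z ∈ Metric.sphere (0 : ℂ) r, HasSum (fun n => a n * z ^ n) (g z)) :
    Continuous fun θ => g (circleMap 0 r θ) := by
  have hseries : (fun θ => g (circleMap 0 r θ)) = fun θ => ∑' n, a n * circleMap 0 r θ ^ n :=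
    funext fun θ => (hg _ (circleMap_mem_sphere 0 hr θ)).tsum_eq.symm
  rw [hseries]
  exact continuous_tsum (fun n => by fun_prop) ha fun n θ => by
    simp [norm_pow, abs_of_nonneg hr]

theorem integral_circleMap_zpow_neg_mul_pow (hr : r ≠ 0) (j : ℤ) (n : ℕ) :
    ∫ θ in (0)..(2 * π), circleMap 0 r θ ^ (-j) * circleMap 0 r θ ^ n
      = if (n : ℤ) = j then (2 * π : ℂ) else 0 := by
  have hmono : ∀ θ : ℝ, circleMap 0 r θ ^ (-j) * circleMap 0 r θ ^ n
      = circleMap 0 r θ ^ ((n : ℤ) - j) := fun θ => by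
    rw [zpow_sub₀ (circleMap_ne_center hr), zpow_neg, zpow_natCast, mul_comm, div_eq_mul_inv]
  simp only [hmono, integral_circleMap_zpow hr, sub_eq_zero]

theorem hasSum_ite_natCast_eq {M : Type*} [AddCommMonoid M] [TopologicalSpace M] (a : ℕ → M)
    (j : ℤ) : HasSum (fun n : ℕ => if (n : ℤ) = j then a n else 0)
      (if 0 ≤ j then a j.toNat else 0) := by
  split_ifs with hj
  · have hsingle : (fun n : ℕ => if (n : ℤ) = j then a n else 0)
        = fun n => if n = j.toNat then a j.toNat else 0 := funext fun n => by
      by_cases hn : n = j.toNat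
      · simp [hn, Int.toNat_of_nonneg hj]
      · simp [hn, show (n : ℤ) ≠ j by omega]
    rw [hsingle]
    exact hasSum_ite_eq _ _
  · simp only [show ∀ n : ℕ, (n : ℤ) ≠ j from fun n => by omega, if_false]
    exact hasSum_zero

theorem integral_circleMap_zpow_mul_of_hasSum (hr : 0 < r)
    (ha : Summable fun n => ‖a n‖ * r ^ n)
    (hg : ∀ z ∈ Metric.sphere (0 : ℂ) r, HasSum (fun n => a n * z ^ n) (g z)) (j : ℤ) :
    ∫ θ in (0)..(2 * π), circleMap 0 r θ ^ (-j) * g (circleMap 0 r θ)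
      = 2 * π * if 0 ≤ j then a j.toNat else 0 := by
  have hsum := intervalIntegral.hasSum_integral_of_dominated_convergence (μ := volume)
    (a := 0) (b := 2 * π) (F := fun n θ => a n * (circleMap 0 r θ ^ (-j) * circleMap 0 r θ ^ n))
    (fun n _ => r ^ (-j) * (‖a n‖ * r ^ n))
    (fun n => (continuous_const.mul (((continuous_circleMap 0 r).zpow₀ _ fun _ =>
      Or.inl (circleMap_ne_center hr.ne')).mul (by fun_prop))).aestronglyMeasurable)
    (fun n => ae_of_all _ fun θ _ => le_of_eq <| by simp [norm_pow, norm_zpow, abs_of_pos hr]; ring)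
    (ae_of_all _ fun _ _ => ha.mul_left _) intervalIntegrable_const
    (ae_of_all _ fun θ _ => ((hg _ (circleMap_mem_sphere 0 hr.le θ)).mul_left
      (circleMap 0 r θ ^ (-j))).congr_fun fun n => by ring)
  refine hsum.unique ?_
  simp only [intervalIntegral.integral_const_mul, integral_circleMap_zpow_neg_mul_pow hr.ne']
  refine ((hasSum_ite_natCast_eq a j).mul_left (2 * π : ℂ)).congr_fun fun n => ?_
  split_ifs <;> ring

theorem integral_circleMap_kernel_mul_of_hasSum (hr : 0 < r)
    (ha : Summable fun n => ‖a n‖ * r ^ n)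
    (hg : ∀ z ∈ Metric.sphere (0 : ℂ) r, HasSum (fun n => a n * z ^ n) (g z)) (n : ℕ) (m : ℤ) :
    ∫ θ in (0)..(2 * π),
        circleMap 0 r θ ^ (-m) * (1 - (circleMap 0 r θ)⁻¹) ^ n * g (circleMap 0 r θ)
      = 2 * π * altBinomSum n (fun j => if 0 ≤ j then a j.toNat else 0) m := by
  have hz : ∀ θ, circleMap 0 r θ ≠ 0 := fun θ => circleMap_ne_center hr.ne'
  have hexpand : ∀ θ : ℝ,
      circleMap 0 r θ ^ (-m) * (1 - (circleMap 0 r θ)⁻¹) ^ n * g (circleMap 0 r θ)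
        = ∑ k ∈ range (n + 1), (n.choose k : ℂ) * (-1) ^ k *
            (circleMap 0 r θ ^ (-(m + k)) * g (circleMap 0 r θ)) := fun θ => by
    rw [one_sub_pow_eq_sum, mul_sum, sum_mul]
    refine sum_congr rfl fun k _ => ?_
    rw [neg_add, zpow_add₀ (hz θ), zpow_neg (circleMap 0 r θ) k, zpow_natCast, inv_pow]
    ring
  have hcont : ∀ j : ℤ, Continuous fun θ => circleMap 0 r θ ^ (-j) * g (circleMap 0 r θ) :=
    fun j => ((continuous_circleMap 0 r).zpow₀ _ fun θ => Or.inl (hz θ)).mul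
      (continuous_comp_circleMap_of_hasSum hr.le ha hg)
  simp only [hexpand]
  rw [intervalIntegral.integral_finsetSum fun k _ =>
    ((hcont _).const_mul _).intervalIntegrable _ _]
  simp only [intervalIntegral.integral_const_mul, integral_circleMap_zpow_mul_of_hasSum hr ha hg,
    altBinomSum, mul_sum]
  exact sum_congr rfl fun k _ => by ring

end CircleCoefficients

theorem neg_half_le_re_mul_inv_one_sub {w : ℂ} (hw : ‖w‖ ≤ 1) (hw1 : w ≠ 1) :
    -1 / 2 ≤ (w * (1 - w)⁻¹).re := by
  have hne : 1 - w ≠ 0 := sub_ne_zero.mpr (Ne.symm hw1)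
  have hpos := Complex.normSq_pos.mpr hne
  have hw2 : Complex.normSq w ≤ 1 := by
    rw [Complex.normSq_eq_norm_sq]
    nlinarith [norm_nonneg w]
  rw [show w * (1 - w)⁻¹ = -1 + (1 - w)⁻¹ by field_simp; ring, Complex.add_re,
    Complex.inv_re]
  have hhalf : 1 / 2 ≤ (1 - w).re / Complex.normSq (1 - w) := by
    rw [le_div_iff₀ hpos]
    simp only [Complex.normSq_apply, Complex.sub_re, Complex.sub_im, Complex.one_re,
      Complex.one_im] at hw2 ⊢
    nlinarith
  simp only [Complex.neg_re, Complex.one_re]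
  linarith

theorem norm_lagGenFun_le {x : ℝ} (hx : 0 ≤ x) {z : ℂ} (hz : ‖z‖ ≤ 1) (hz1 : z ≠ 1) :
    ‖lagGenFun x z‖ ≤ ‖1 - z‖⁻¹ * exp (x / 2) := by
  rw [lagGenFun, norm_mul, norm_inv, Complex.norm_exp]
  gcongr
  rw [show -(x : ℂ) * z * (1 - z)⁻¹ = ((-x : ℝ) : ℂ) * (z * (1 - z)⁻¹) by push_cast; ring,
    Complex.re_ofReal_mul]
  nlinarith [neg_half_le_re_mul_inv_one_sub hz hz1]

theorem norm_kernel_mul_lagGenFun_le {x : ℝ} (hx : 0 ≤ x) (m : ℤ) (ν : ℕ) {r : ℝ}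
    (hr0 : 0 < r) (hr1 : r < 1) {z : ℂ} (hz : ‖z‖ = r) :
    ‖z ^ (-m) * (1 - z⁻¹) ^ (ν + 1) * lagGenFun x z‖
      ≤ r ^ (-(m + ν + 1)) * (1 + r) ^ ν * exp (x / 2) := by
  have hz0 : z ≠ 0 := by rintro rfl; simp at hz; linarith
  have hz1 : z ≠ 1 := by rintro rfl; simp at hz; linarith
  have hpos : 0 < ‖1 - z‖ := norm_pos_iff.mpr (sub_ne_zero.mpr hz1.symm)
  have hker : ‖1 - z⁻¹‖ = ‖1 - z‖ * r⁻¹ := by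
    rw [show 1 - z⁻¹ = -(1 - z) * z⁻¹ by field_simp; ring, norm_mul, norm_neg, norm_inv, hz]
  have hle : ‖1 - z‖ ≤ 1 + r := (norm_sub_le _ _).trans (by rw [norm_one, hz])
  calc ‖z ^ (-m) * (1 - z⁻¹) ^ (ν + 1) * lagGenFun x z‖
      ≤ r ^ (-m) * (‖1 - z‖ * r⁻¹) ^ (ν + 1) * (‖1 - z‖⁻¹ * exp (x / 2)) := by
        rw [norm_mul, norm_mul, norm_zpow, norm_pow, hz, hker]
        gcongr
        exact norm_lagGenFun_le hx (hz ▸ hr1.le) hz1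
    _ = r ^ (-(m + ν + 1)) * ‖1 - z‖ ^ ν * exp (x / 2) := by
        rw [show -(m + ν + 1) = -m - ((ν + 1 : ℕ) : ℤ) by push_cast; ring,
          zpow_sub₀ hr0.ne', zpow_natCast, mul_pow, pow_succ ‖1 - z‖, inv_pow]
        field_simp
    _ ≤ r ^ (-(m + ν + 1)) * (1 + r) ^ ν * exp (x / 2) := by gcongr

noncomputable def lagPolyInt (j : ℤ) (x : ℝ) : ℝ :=
  if 0 ≤ j then lagPoly j.toNat x else 0

theorem abs_altBinomSum_lagPolyInt_le_of_lt_one {x : ℝ} (hx : 0 ≤ x) (ν : ℕ) (m : ℤ) {r : ℝ}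
    (hr0 : 0 < r) (hr1 : r < 1) :
    |altBinomSum (ν + 1) (fun j => lagPolyInt j x) m|
      ≤ r ^ (-(m + ν + 1)) * (1 + r) ^ ν * exp (x / 2) := by
  have hr : ‖(r : ℂ)‖ < 1 := by rwa [Complex.norm_real, Real.norm_of_nonneg hr0.le]
  have hid := integral_circleMap_kernel_mul_of_hasSum hr0
    (a := fun n => (lagPoly n x : ℂ)) (g := lagGenFun x)
    (by simpa [norm_mul, abs_of_pos hr0] using summable_norm_lagPoly_mul_pow x hr)
    (fun z hz => hasSum_lagPoly_mul_pow x (by rwa [mem_sphere_zero_iff_norm.mp hz])) (ν + 1) m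
  have hcast : altBinomSum (ν + 1) (fun j => if 0 ≤ j then (lagPoly j.toNat x : ℂ) else 0) m
      = ((altBinomSum (ν + 1) (fun j => lagPolyInt j x) m : ℝ) : ℂ) := by
    simp [altBinomSum, lagPolyInt, apply_ite]
  have hbound := intervalIntegral.norm_integral_le_of_norm_le_const (a := 0) (b := 2 * π)
    fun θ _ => norm_kernel_mul_lagGenFun_le hx m ν hr0 hr1 (z := circleMap 0 r θ)
      (by simp [abs_of_pos hr0])
  have h2pi : ‖(2 * π : ℂ)‖ = 2 * π := by simp [pi_pos.le]
  rw [hid, hcast, norm_mul, h2pi, Complex.norm_real, Real.norm_eq_abs, sub_zero,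
    abs_of_pos two_pi_pos, mul_comm _ (2 * π)] at hbound
  exact le_of_mul_le_mul_left hbound two_pi_pos

open Filter Topology in
theorem abs_altBinomSum_lagPolyInt_le {x : ℝ} (hx : 0 ≤ x) (ν : ℕ) (m : ℤ) :
    |altBinomSum (ν + 1) (fun j => lagPolyInt j x) m| ≤ 2 ^ ν * exp (x / 2) := by
  have hlim : Tendsto (fun r : ℝ => r ^ (-(m + ν + 1)) * (1 + r) ^ ν * exp (x / 2)) (𝓝[<] 1)
      (𝓝 (2 ^ ν * exp (x / 2))) := by
    have hcont : ContinuousAt (fun r : ℝ => r ^ (-(m + ν + 1)) * (1 + r) ^ ν * exp (x / 2)) 1 := by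
      fun_prop (disch := norm_num)
    simpa [one_add_one_eq_two] using hcont.tendsto.mono_left nhdsWithin_le_nhds
  refine ge_of_tendsto hlim ?_
  filter_upwards [Ioo_mem_nhdsLT zero_lt_one] with r hr
  exact abs_altBinomSum_lagPolyInt_le_of_lt_one hx ν m hr.1 hr.2

theorem lagFun_of_nonneg {t : ℝ} (ht : 0 ≤ t) (j : ℤ) :
    lagFun j t = √2 * exp (-t) * lagPolyInt j (2 * t) := by
  unfold lagFun lagPolyInt
  split_ifs <;> simp [Set.indicator_of_mem (Set.mem_Ici.mpr ht), not_lt.mpr ht]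
  ring

theorem lagFun_of_neg {t : ℝ} (ht : t < 0) (j : ℤ) :
    lagFun j t = -1 * lagFun (-j - 1) (-t) := by
  unfold lagFun
  by_cases hj : 0 ≤ j
  · rw [if_pos hj, if_neg (by omega), Set.indicator_of_notMem (by simpa using ht),
      Set.indicator_of_notMem (by simpa using ht.le), mul_zero]
  · rw [if_neg hj, if_pos (by omega), Set.indicator_of_mem (by simpa using ht),
      Set.indicator_of_mem (by simpa using ht.le), neg_neg, mul_neg]
    ring

theorem abs_altBinomSum_lagFun_le (ν : ℕ) (m : ℤ) (t : ℝ) :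
    |altBinomSum (ν + 1) (fun j => lagFun j t) m| ≤ √2 * 2 ^ ν := by
  wlog ht : 0 ≤ t generalizing m t
  · have hrefl : (fun j => lagFun j t) = fun j => -1 * lagFun (-j - 1) (-t) :=
      funext (lagFun_of_neg (not_le.mp ht))
    rw [hrefl, altBinomSum_const_mul, altBinomSum_comp_neg_sub_one (f := fun i => lagFun i (-t)),
      abs_mul, abs_mul, abs_neg, abs_one, one_mul, abs_pow, abs_neg, abs_one, one_pow, one_mul]
    exact this _ _ (by linarith)
  have hscale : (fun j => lagFun j t) = fun j => √2 * exp (-t) * lagPolyInt j (2 * t) :=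
    funext (lagFun_of_nonneg ht)
  rw [hscale, altBinomSum_const_mul, abs_mul, abs_of_pos (by positivity)]
  calc √2 * exp (-t) * |altBinomSum (ν + 1) (fun j => lagPolyInt j (2 * t)) m|
      ≤ √2 * exp (-t) * (2 ^ ν * exp (2 * t / 2)) := by
        gcongr
        exact abs_altBinomSum_lagPolyInt_le (by linarith) ν m
    _ = √2 * 2 ^ ν := by
        rw [mul_div_cancel_left₀ t two_ne_zero, mul_mul_mul_comm, ← exp_add, neg_add_cancel,
          exp_zero, mul_one]

/-- Uniform bound on the Matérn–Laguerre functions. -/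
theorem maternLag_abs_le (ν : ℕ) (m : ℤ) (t : ℝ) :
    |maternLag ν m t| ≤
      2 ^ ν * (Nat.factorial ν : ℝ) / Real.sqrt (Nat.factorial (2 * ν)) := by
  have hdiff : maternLag ν m t = 1 / √2 * (ν.factorial / √(2 * ν).factorial)
      * altBinomSum (ν + 1) (fun j => lagFun j t) m := rfl
  rw [hdiff, abs_mul, abs_of_nonneg (by positivity)]
  calc 1 / √2 * (ν.factorial / √(2 * ν).factorial) * |altBinomSum (ν + 1) (fun j => lagFun j t) m|
      ≤ 1 / √2 * (ν.factorial / √(2 * ν).factorial) * (√2 * 2 ^ ν) := by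
        gcongr
        exact abs_altBinomSum_lagFun_le ν m t
    _ = 2 ^ ν * ν.factorial / √(2 * ν).factorial := by
        field_simp
end

section
/- Fix ν ∈ ℕ₀ and define the null-space Matérn–Laguerre functions ψ⁰_{m,ν}(t) = ψ_{−ν−1+m,ν}(t) for m = 0, 1, …, ν. Then for every m with 0 ≤ m ≤ ν and every t ∈ ℝ one has the symmetry ψ⁰_{ν−m,ν}(t) = (−1)^ν ψ⁰_{m,ν}(−t). -/
open Real Finset

/-- The null-space Matérn–Laguerre function `ψ⁰_{m,ν} = ψ_{−ν−1+m,ν}` for `0 ≤ m ≤ ν`. -/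
noncomputable def psiNull (ν m : ℕ) (t : ℝ) : ℝ :=
  maternLag ν (-(ν : ℤ) - 1 + (m : ℤ)) t

lemma lagFun_neg (j : ℤ) (t : ℝ) (ht : t ≠ 0) : lagFun (-j - 1) t = - lagFun j (-t) := by
  unfold lagFun
  by_cases h : 0 ≤ j
  · have h1 : ¬ (0 ≤ -j - 1) := by omega
    have h2 : -(-j - 1) - 1 = j := by ring
    rw [if_neg h1, if_pos h, h2]
    rcases lt_or_gt_of_ne ht with htlt | htgt
    · rw [Set.indicator_of_mem (by exact htlt) , Set.indicator_of_mem (by simp; linarith)]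
      simp [mul_neg, neg_neg]
    · rw [Set.indicator_of_notMem (by simp; linarith), Set.indicator_of_notMem (by simp; linarith)]
      simp
  · have h1 : 0 ≤ -j - 1 := by omega
    rw [if_pos h1, if_neg h]
    have h2 : (-j - 1).toNat = (-j - 1).toNat := rfl
    rcases lt_or_gt_of_ne ht with htlt | htgt
    · rw [Set.indicator_of_notMem (by simp; linarith), Set.indicator_of_notMem (by simp; linarith)]
      simp
    · rw [Set.indicator_of_mem (by simp; linarith), Set.indicator_of_mem (by simp; linarith)]
      simp [mul_neg, neg_neg]

lemma lagPoly_zero (m : ℕ) : lagPoly m 0 = 1 := by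
  unfold lagPoly
  rw [Finset.sum_eq_single 0]
  · simp
  · intro k _ hk
    simp [pow_eq_zero_iff, hk]
  · simp

lemma lagFun_zero (j : ℤ) : lagFun j 0 = if 0 ≤ j then Real.sqrt 2 else 0 := by
  unfold lagFun
  by_cases h : 0 ≤ j
  · rw [if_pos h, if_pos h, Set.indicator_of_mem (by simp)]
    simp [lagPoly_zero]
  · rw [if_neg h, if_neg h, Set.indicator_of_notMem (by simp)]

lemma alt_sum_zero (n : ℕ) (hn : n ≠ 0) :
    ∑ k ∈ Finset.range (n + 1), ((n.choose k : ℝ) * (-1) ^ k) = 0 := by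
  have := Int.alternating_sum_range_choose (n := n)
  rw [if_neg hn] at this
  have : ((∑ i ∈ Finset.range (n + 1), (-1) ^ i * (n.choose i) : ℤ) : ℝ) = 0 := by
    rw [this]; norm_num
  push_cast at this
  rw [← this]
  apply Finset.sum_congr rfl
  intro k _
  ring

/-- Null-space symmetry: `ψ⁰_{ν−m,ν}(t) = (−1)^ν ψ⁰_{m,ν}(−t)`. -/
theorem psiNull_symmetry (ν m : ℕ) (hm : m ≤ ν) (t : ℝ) :
    psiNull ν (ν - m) t = (-1) ^ ν * psiNull ν m (-t) := by
  unfold psiNull maternLag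
  have hcast : ((ν - m : ℕ) : ℤ) = (ν : ℤ) - m := by
    push_cast [hm]; ring
  rw [hcast]
  set c : ℝ := (1 / Real.sqrt 2) * ((Nat.factorial ν : ℝ) / Real.sqrt (Nat.factorial (2 * ν))) with hc
  suffices h : (∑ k ∈ Finset.range (ν + 2),
      (Nat.choose (ν + 1) k : ℝ) * (-1) ^ k * lagFun (-(ν : ℤ) - 1 + ((ν : ℤ) - m) + k) t)
      = (-1) ^ ν * ∑ k ∈ Finset.range (ν + 2),
      (Nat.choose (ν + 1) k : ℝ) * (-1) ^ k * lagFun (-(ν : ℤ) - 1 + m + k) (-t) by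
    rw [h]; ring
  rcases eq_or_ne t 0 with rfl | ht
  · -- boundary case t = 0
    simp only [neg_zero, lagFun_zero]
    have L : (∑ k ∈ Finset.range (ν + 2),
        (Nat.choose (ν + 1) k : ℝ) * (-1) ^ k *
          (if 0 ≤ -(ν : ℤ) - 1 + ((ν : ℤ) - m) + k then Real.sqrt 2 else 0))
        = ∑ k ∈ Finset.range (ν + 2),
          (if m + 1 ≤ k then (Nat.choose (ν + 1) k : ℝ) * (-1) ^ k * Real.sqrt 2 else 0) := by
      apply Finset.sum_congr rfl
      intro k _
      by_cases hk : m + 1 ≤ k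
      · rw [if_pos (by omega), if_pos hk]
      · rw [if_neg (by omega), if_neg hk, mul_zero]
    have R : (∑ k ∈ Finset.range (ν + 2),
        (Nat.choose (ν + 1) k : ℝ) * (-1) ^ k *
          (if 0 ≤ -(ν : ℤ) - 1 + m + k then Real.sqrt 2 else 0))
        = ∑ k ∈ Finset.range (ν + 2),
          (if ν + 1 - m ≤ k then (Nat.choose (ν + 1) k : ℝ) * (-1) ^ k * Real.sqrt 2 else 0) := by
      apply Finset.sum_congr rfl
      intro k _
      by_cases hk : ν + 1 - m ≤ k
      · rw [if_pos (by omega), if_pos hk]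
      · rw [if_neg (by omega), if_neg hk, mul_zero]
    rw [L, R]
    -- reflect the RHS sum
    have Rrefl : (∑ k ∈ Finset.range (ν + 2),
        (if ν + 1 - m ≤ k then (Nat.choose (ν + 1) k : ℝ) * (-1) ^ k * Real.sqrt 2 else 0))
        = ∑ k ∈ Finset.range (ν + 2),
          (if k ≤ m then (Nat.choose (ν + 1) k : ℝ) * (-1) ^ (ν + 1) * (-1) ^ k * Real.sqrt 2 else 0) := by
      rw [← Finset.sum_range_reflect
        (fun k => if ν + 1 - m ≤ k then (Nat.choose (ν + 1) k : ℝ) * (-1) ^ k * Real.sqrt 2 else 0) (ν + 2)]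
      apply Finset.sum_congr rfl
      intro k hk
      rw [Finset.mem_range] at hk
      have hk1 : k ≤ ν + 1 := by omega
      have hcond : (ν + 1 - m ≤ ν + 2 - 1 - k) ↔ k ≤ m := by omega
      have hch : Nat.choose (ν + 1) (ν + 2 - 1 - k) = Nat.choose (ν + 1) k := by
        have : ν + 2 - 1 - k = ν + 1 - k := by omega
        rw [this, Nat.choose_symm hk1]
      by_cases hkm : k ≤ m
      · rw [if_pos (hcond.mpr hkm), if_pos hkm, hch]
        have hexp : ν + 2 - 1 - k = ν + 1 - k := by omega
        rw [hexp]
        have h1 : ((-1 : ℝ)) ^ (ν + 1 - k) * (-1) ^ k = (-1) ^ (ν + 1) := by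
          rw [← pow_add, Nat.sub_add_cancel hk1]
        have h2 : ((-1 : ℝ)) ^ k * (-1) ^ k = 1 := by
          rw [← mul_pow]; norm_num
        have : ((-1 : ℝ)) ^ (ν + 1 - k) = (-1) ^ (ν + 1) * (-1) ^ k := by
          calc ((-1 : ℝ)) ^ (ν + 1 - k) = ((-1) ^ (ν + 1 - k) * (-1) ^ k) * (-1) ^ k := by
                rw [mul_assoc, h2, mul_one]
            _ = (-1) ^ (ν + 1) * (-1) ^ k := by rw [h1]
        rw [this]; ring
      · rw [if_neg (fun hc => hkm (hcond.mp hc)), if_neg hkm]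
    rw [Rrefl]
    -- now use total alternating sum = 0
    have split : ∀ k, (if m + 1 ≤ k then (Nat.choose (ν + 1) k : ℝ) * (-1) ^ k * Real.sqrt 2 else 0)
        = (Nat.choose (ν + 1) k : ℝ) * (-1) ^ k * Real.sqrt 2
          - (if k ≤ m then (Nat.choose (ν + 1) k : ℝ) * (-1) ^ k * Real.sqrt 2 else 0) := by
      intro k
      by_cases hk : m + 1 ≤ k
      · rw [if_pos hk, if_neg (by omega)]; ring
      · rw [if_neg hk, if_pos (by omega)]; ring
    simp only [split]
    rw [Finset.sum_sub_distrib]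
    have htot : (∑ k ∈ Finset.range (ν + 2), (Nat.choose (ν + 1) k : ℝ) * (-1) ^ k * Real.sqrt 2) = 0 := by
      rw [← Finset.sum_mul, alt_sum_zero (ν + 1) (by omega), zero_mul]
    rw [htot, zero_sub]
    rw [Finset.mul_sum]
    rw [← Finset.sum_neg_distrib]
    apply Finset.sum_congr rfl
    intro k _
    by_cases hk : k ≤ m
    · rw [if_pos hk, if_pos hk]
      have hs : ((-1 : ℝ)) ^ ν * (-1) ^ (ν + 1) = -1 := by
        rw [← pow_add]; exact Odd.neg_one_pow ⟨ν, by ring⟩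
      linear_combination (-(((ν + 1).choose k : ℝ) * (-1) ^ k * Real.sqrt 2)) * hs
    · rw [if_neg hk, if_neg hk]; ring
  · -- generic case t ≠ 0
    rw [← Finset.sum_range_reflect
      (fun k => (Nat.choose (ν + 1) k : ℝ) * (-1) ^ k * lagFun (-(ν : ℤ) - 1 + ((ν : ℤ) - m) + k) t) (ν + 2)]
    rw [Finset.mul_sum]
    apply Finset.sum_congr rfl
    intro k hk
    rw [Finset.mem_range] at hk
    have hk1 : k ≤ ν + 1 := by omega
    have hexp : ν + 2 - 1 - k = ν + 1 - k := by omega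
    simp only [hexp]
    have hch : Nat.choose (ν + 1) (ν + 1 - k) = Nat.choose (ν + 1) k := Nat.choose_symm hk1
    have hidx : -(ν : ℤ) - 1 + ((ν : ℤ) - m) + ((ν + 1 - k : ℕ) : ℤ) = -( (-(ν : ℤ) - 1 + m + k)) - 1 := by
      push_cast [hk1]
      omega
    rw [hch, hidx, lagFun_neg _ _ ht]
    have h1 : ((-1 : ℝ)) ^ (ν + 1 - k) * (-1) ^ k = (-1) ^ (ν + 1) := by
      rw [← pow_add, Nat.sub_add_cancel hk1]
    have h2 : ((-1 : ℝ)) ^ k * (-1) ^ k = 1 := by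
      rw [← mul_pow]; norm_num
    have hsign : ((-1 : ℝ)) ^ (ν + 1 - k) = (-1) ^ (ν + 1) * (-1) ^ k := by
      calc ((-1 : ℝ)) ^ (ν + 1 - k) = ((-1) ^ (ν + 1 - k) * (-1) ^ k) * (-1) ^ k := by
            rw [mul_assoc, h2, mul_one]
        _ = (-1) ^ (ν + 1) * (-1) ^ k := by rw [h1]
    rw [hsign]
    ring
end

section
/- For all ν, m ∈ ℕ₀ and all x ∈ ℝ, the alternating binomial sum of Laguerre polynomials satisfies ∑_{k=0}^{ν+1} C(ν+1,k)(−1)^k L_{m+k}(x) = (m!/(m+ν+1)!) · x^{ν+1} · L_m^{(ν+1)}(x). -/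
open Real Finset

/-- The associated Laguerre polynomial `L_m^{(η)}(x) = ∑_{k=0}^m C(m+η, m−k)(−1)^k x^k/k!`. -/
noncomputable def assocLagPoly (m η : ℕ) (x : ℝ) : ℝ :=
  ∑ k ∈ Finset.range (m + 1),
    (Nat.choose (m + η) (m - k) : ℝ) * (-1) ^ k / (Nat.factorial k : ℝ) * x ^ k

/-- Closed form target `x^{ν+1} ∑ C(m,t)(−1)^t x^t/(ν+1+t)!`. -/
noncomputable def Tpoly (ν m : ℕ) (x : ℝ) : ℝ :=
  x ^ (ν + 1) * ∑ t ∈ Finset.range (m + 1),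
    (Nat.choose m t : ℝ) * (-1) ^ t / (Nat.factorial (ν + 1 + t) : ℝ) * x ^ t

lemma binom_shift (m : ℕ) (f : ℕ → ℝ) :
    ∑ k ∈ Finset.range (m + 2), (Nat.choose (m + 1) k : ℝ) * f k =
      ∑ k ∈ Finset.range (m + 1), (Nat.choose m k : ℝ) * f k +
      ∑ k ∈ Finset.range (m + 1), (Nat.choose m k : ℝ) * f (k + 1) := by
  rw [Finset.sum_range_succ' (fun k => (Nat.choose (m + 1) k : ℝ) * f k) (m + 1)]
  have h : ∀ i ∈ Finset.range (m + 1),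
      ((m + 1).choose (i + 1) : ℝ) * f (i + 1) =
        (m.choose i : ℝ) * f (i + 1) + (m.choose (i + 1) : ℝ) * f (i + 1) := by
    intro i _
    rw [Nat.choose_succ_succ]
    push_cast
    ring
  rw [Finset.sum_congr rfl h, Finset.sum_add_distrib]
  have h2 : ∑ i ∈ Finset.range (m + 1), (m.choose (i + 1) : ℝ) * f (i + 1) +
      ((m + 1).choose 0 : ℝ) * f 0 = ∑ k ∈ Finset.range (m + 1), (m.choose k : ℝ) * f k := by
    rw [Finset.sum_range_succ' (fun k => (m.choose k : ℝ) * f k) m,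
      Finset.sum_range_succ (fun i => (m.choose (i + 1) : ℝ) * f (i + 1)) m]
    simp [Nat.choose_succ_self]
  linarith [h2]

lemma lag_base (m : ℕ) (x : ℝ) : lagPoly m x - lagPoly (m + 1) x = Tpoly 0 m x := by
  have h := binom_shift m (fun k => (-1) ^ k / (Nat.factorial k : ℝ) * x ^ k)
  have hL : lagPoly (m + 1) x = lagPoly m x + ∑ k ∈ Finset.range (m + 1),
      (m.choose k : ℝ) * ((-1) ^ (k + 1) / (Nat.factorial (k + 1) : ℝ) * x ^ (k + 1)) := by
    unfold lagPoly
    calc ∑ k ∈ Finset.range (m + 1 + 1),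
          ((m + 1).choose k : ℝ) * (-1) ^ k / (Nat.factorial k : ℝ) * x ^ k
        = ∑ k ∈ Finset.range (m + 2), ((m + 1).choose k : ℝ) *
            ((-1) ^ k / (Nat.factorial k : ℝ) * x ^ k) := by
          apply Finset.sum_congr rfl; intro k _; ring
      _ = _ := by
          rw [h]; congr 1
          apply Finset.sum_congr rfl; intro k _; ring
  have key : ∑ k ∈ Finset.range (m + 1),
      (m.choose k : ℝ) * ((-1) ^ (k + 1) / (Nat.factorial (k + 1) : ℝ) * x ^ (k + 1)) =
      -(x * ∑ t ∈ Finset.range (m + 1),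
        (m.choose t : ℝ) * (-1) ^ t / (Nat.factorial (0 + 1 + t) : ℝ) * x ^ t) := by
    rw [Finset.mul_sum, ← Finset.sum_neg_distrib]
    apply Finset.sum_congr rfl
    intro t _
    have hi : 0 + 1 + t = t + 1 := by omega
    rw [hi]
    ring
  unfold Tpoly
  rw [hL, key]
  ring

lemma T_step (ν m : ℕ) (x : ℝ) :
    Tpoly ν m x - Tpoly ν (m + 1) x = Tpoly (ν + 1) m x := by
  have h := binom_shift m (fun t => (-1) ^ t / (Nat.factorial (ν + 1 + t) : ℝ) * x ^ t)
  have hT : ∑ t ∈ Finset.range (m + 1 + 1),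
      ((m + 1).choose t : ℝ) * (-1) ^ t / (Nat.factorial (ν + 1 + t) : ℝ) * x ^ t =
      (∑ t ∈ Finset.range (m + 1),
        (m.choose t : ℝ) * (-1) ^ t / (Nat.factorial (ν + 1 + t) : ℝ) * x ^ t) +
      ∑ t ∈ Finset.range (m + 1), (m.choose t : ℝ) *
        ((-1) ^ (t + 1) / (Nat.factorial (ν + 1 + (t + 1)) : ℝ) * x ^ (t + 1)) := by
    calc ∑ t ∈ Finset.range (m + 1 + 1),
          ((m + 1).choose t : ℝ) * (-1) ^ t / (Nat.factorial (ν + 1 + t) : ℝ) * x ^ t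
        = ∑ t ∈ Finset.range (m + 2), ((m + 1).choose t : ℝ) *
            ((-1) ^ t / (Nat.factorial (ν + 1 + t) : ℝ) * x ^ t) := by
          apply Finset.sum_congr rfl; intro k _; ring
      _ = _ := by
          rw [h]; congr 1
          apply Finset.sum_congr rfl; intro k _; ring
  have key : ∑ t ∈ Finset.range (m + 1), (m.choose t : ℝ) *
      ((-1) ^ (t + 1) / (Nat.factorial (ν + 1 + (t + 1)) : ℝ) * x ^ (t + 1)) =
      -(x * ∑ t ∈ Finset.range (m + 1),
        (m.choose t : ℝ) * (-1) ^ t / (Nat.factorial (ν + 1 + 1 + t) : ℝ) * x ^ t) := by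
    rw [Finset.mul_sum, ← Finset.sum_neg_distrib]
    apply Finset.sum_congr rfl
    intro t _
    have hi : ν + 1 + (t + 1) = ν + 1 + 1 + t := by omega
    rw [hi]
    ring
  unfold Tpoly
  rw [hT, key]
  ring

lemma D_eq_T (ν : ℕ) : ∀ (m : ℕ) (x : ℝ),
    ∑ k ∈ Finset.range (ν + 2), (Nat.choose (ν + 1) k : ℝ) * (-1) ^ k * lagPoly (m + k) x =
      Tpoly ν m x := by
  induction ν with
  | zero =>
    intro m x
    rw [Finset.sum_range_succ, Finset.sum_range_succ, Finset.sum_range_zero]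
    simp only [Nat.choose_zero_right, Nat.choose_one_right, Nat.cast_one, pow_zero, pow_one]
    rw [← lag_base m x]
    ring
  | succ n ih =>
    intro m x
    have h := binom_shift (n + 1) (fun k => (-1) ^ k * lagPoly (m + k) x)
    have hr : ∑ k ∈ Finset.range (n + 1 + 2),
        ((n + 1 + 1).choose k : ℝ) * (-1) ^ k * lagPoly (m + k) x =
        (∑ k ∈ Finset.range (n + 2), ((n + 1).choose k : ℝ) * (-1) ^ k * lagPoly (m + k) x) -
        ∑ k ∈ Finset.range (n + 2), ((n + 1).choose k : ℝ) * (-1) ^ k * lagPoly (m + 1 + k) x := by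
      calc ∑ k ∈ Finset.range (n + 1 + 2),
            ((n + 1 + 1).choose k : ℝ) * (-1) ^ k * lagPoly (m + k) x
          = ∑ k ∈ Finset.range (n + 1 + 2), ((n + 1 + 1).choose k : ℝ) *
              ((-1) ^ k * lagPoly (m + k) x) := by
            apply Finset.sum_congr rfl; intro k _; ring
        _ = _ := by
            rw [show n + 1 + 2 = n + 1 + 1 + 1 from rfl, h]
            have h2 : ∑ k ∈ Finset.range (n + 2), ((n + 1).choose k : ℝ) *
                ((-1) ^ (k + 1) * lagPoly (m + (k + 1)) x) =
                -∑ k ∈ Finset.range (n + 2), ((n + 1).choose k : ℝ) * (-1) ^ k *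
                  lagPoly (m + 1 + k) x := by
              rw [← Finset.sum_neg_distrib]
              apply Finset.sum_congr rfl
              intro k _
              have : m + (k + 1) = m + 1 + k := by omega
              rw [this]; ring
            rw [h2]
            have h3 : ∑ k ∈ Finset.range (n + 2), ((n + 1).choose k : ℝ) *
                ((-1) ^ k * lagPoly (m + k) x) =
                ∑ k ∈ Finset.range (n + 2), ((n + 1).choose k : ℝ) * (-1) ^ k *
                  lagPoly (m + k) x := by
              apply Finset.sum_congr rfl; intro k _; ring
            rw [h3]
            ring
    rw [hr, ih m x, ih (m + 1) x, T_step]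

lemma coeff_eq (ν m t : ℕ) (ht : t ≤ m) :
    (m.choose t : ℝ) / (Nat.factorial (ν + 1 + t) : ℝ) =
      (Nat.factorial m : ℝ) / (Nat.factorial (m + ν + 1) : ℝ) *
        ((m + (ν + 1)).choose (m - t) : ℝ) / (Nat.factorial t : ℝ) := by
  have h1 : (m + ν + 1).choose (m - t) * Nat.factorial (m - t) *
      Nat.factorial (ν + 1 + t) = Nat.factorial (m + ν + 1) := by
    have := Nat.choose_mul_factorial_mul_factorial
      (show m - t ≤ m + ν + 1 by omega)
    rwa [show m + ν + 1 - (m - t) = ν + 1 + t by omega] at this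
  have h2 : m.choose t * Nat.factorial t * Nat.factorial (m - t) = Nat.factorial m :=
    Nat.choose_mul_factorial_mul_factorial ht
  have key : Nat.factorial m * ((m + ν + 1).choose (m - t)) * Nat.factorial (ν + 1 + t) =
      m.choose t * Nat.factorial (m + ν + 1) * Nat.factorial t := by
    rw [← h1, ← h2]; ring
  have hc : m + (ν + 1) = m + ν + 1 := by omega
  rw [hc]
  have f1 : (Nat.factorial (ν + 1 + t) : ℝ) ≠ 0 := by positivity
  have f2 : (Nat.factorial (m + ν + 1) : ℝ) ≠ 0 := by positivity
  have f3 : (Nat.factorial t : ℝ) ≠ 0 := by positivity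
  have keyR : (Nat.factorial m : ℝ) * ((m + ν + 1).choose (m - t) : ℝ) *
      (Nat.factorial (ν + 1 + t) : ℝ) =
      (m.choose t : ℝ) * (Nat.factorial (m + ν + 1) : ℝ) * (Nat.factorial t : ℝ) := by
    exact_mod_cast congrArg (Nat.cast : ℕ → ℝ) key
  field_simp
  linarith [keyR]

/-- Alternating binomial sum of Laguerre polynomials:
`∑_{k=0}^{ν+1} C(ν+1,k)(−1)^k L_{m+k}(x) = (m!/(m+ν+1)!) x^{ν+1} L_m^{(ν+1)}(x)`. -/
theorem laguerre_alternating_binomial_sum (ν m : ℕ) (x : ℝ) :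
    ∑ k ∈ Finset.range (ν + 2), (Nat.choose (ν + 1) k : ℝ) * (-1) ^ k * lagPoly (m + k) x =
      ((Nat.factorial m : ℝ) / (Nat.factorial (m + ν + 1) : ℝ)) * x ^ (ν + 1) *
        assocLagPoly m (ν + 1) x := by
  rw [D_eq_T ν m x]
  unfold Tpoly assocLagPoly
  have hsum : ∑ t ∈ Finset.range (m + 1),
      (m.choose t : ℝ) * (-1) ^ t / (Nat.factorial (ν + 1 + t) : ℝ) * x ^ t =
      ((Nat.factorial m : ℝ) / (Nat.factorial (m + ν + 1) : ℝ)) *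
        ∑ t ∈ Finset.range (m + 1),
          ((m + (ν + 1)).choose (m - t) : ℝ) * (-1) ^ t / (Nat.factorial t : ℝ) * x ^ t := by
    rw [Finset.mul_sum]
    apply Finset.sum_congr rfl
    intro t htm
    have ht : t ≤ m := Nat.lt_succ_iff.mp (Finset.mem_range.mp htm)
    have h := coeff_eq ν m t ht
    rw [show (m.choose t : ℝ) * (-1) ^ t / (Nat.factorial (ν + 1 + t) : ℝ) * x ^ t =
        ((m.choose t : ℝ) / (Nat.factorial (ν + 1 + t) : ℝ)) * ((-1) ^ t * x ^ t) from by
      ring, h]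
    ring
  rw [hsum]
  ring
end

section
/- For every m ∈ ℕ₀ and every t ∈ ℝ, the integral √2 ∫_0^∞ e^{−2ω} L_m(2ω) e^{2iωt} dω converges and equals −(1/√2) (it)^m/(it−1)^{m+1}. -/
/-! For `0 < Re c`, integration by parts gives `∫₀^∞ x^k e^{-cx} dx = k!/c^{k+1}`, so expanding
`L_m` and applying the binomial theorem, the Laplace transform of `x ↦ L_m(sx)` is
`∑ₖ C(m,k)(-s)^k/c^{k+1} = (c - s)^m/c^{m+1}`. The integrand of the theorem is `L_m(2ω) e^{-cω}`
with `c = 2 - 2it = -2(it - 1)`, and then `c - 2 = -2it`. -/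

open Real Finset Complex MeasureTheory

open Filter Topology

section Moments

variable {c : ℂ}

lemma norm_ofReal_pow_mul_cexp_neg_mul {x : ℝ} (hx : 0 ≤ x) (k : ℕ) :
    ‖(x : ℂ) ^ k * cexp (-(c * x))‖ = x ^ k * rexp (-(c.re * x)) := by
  simp [norm_exp, abs_of_nonneg hx]

lemma integrableOn_ofReal_pow_mul_cexp_neg_mul (hc : 0 < c.re) (k : ℕ) :
    IntegrableOn (fun x : ℝ => (x : ℂ) ^ k * cexp (-(c * x))) (Set.Ioi 0) := by
  have hbound : IntegrableOn (fun x : ℝ => x ^ k * rexp (-(c.re * x))) (Set.Ioi 0) := by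
    simpa [neg_mul] using integrableOn_rpow_mul_exp_neg_mul_rpow (p := 1) (s := k)
      (by linarith [k.cast_nonneg (α := ℝ)]) zero_lt_one hc
  refine hbound.mono' (by fun_prop) ?_
  filter_upwards [ae_restrict_mem measurableSet_Ioi] with x hx
  exact (norm_ofReal_pow_mul_cexp_neg_mul (le_of_lt hx) k).le

lemma tendsto_ofReal_pow_mul_cexp_neg_mul_atTop (hc : 0 < c.re) (k : ℕ) :
    Tendsto (fun x : ℝ => (x : ℂ) ^ k * cexp (-(c * x))) atTop (𝓝 0) := by
  rw [tendsto_zero_iff_norm_tendsto_zero]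
  refine (tendsto_rpow_mul_exp_neg_mul_atTop_nhds_zero k c.re hc).congr' ?_
  filter_upwards [eventually_ge_atTop 0] with x hx
  rw [norm_ofReal_pow_mul_cexp_neg_mul hx, Real.rpow_natCast, neg_mul]

lemma hasDerivAt_ofReal_pow_succ_mul_cexp_neg_mul (k : ℕ) (x : ℝ) :
    HasDerivAt (fun x : ℝ => (x : ℂ) ^ (k + 1) * cexp (-(c * x)))
      ((k + 1) * ((x : ℂ) ^ k * cexp (-(c * x))) - c * ((x : ℂ) ^ (k + 1) * cexp (-(c * x))))
      x := by
  have hpow := (hasDerivAt_pow (k + 1) (x : ℂ)).comp_ofReal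
  have hlin := ((hasDerivAt_id x).ofReal_comp.const_mul c).neg
  refine (hpow.mul hlin.cexp).congr_deriv ?_
  push_cast [Nat.add_sub_cancel, id, Pi.neg_apply]
  ring

lemma integral_ofReal_pow_succ_mul_cexp_neg_mul (hc : 0 < c.re) (k : ℕ) :
    c * ∫ x in Set.Ioi (0 : ℝ), (x : ℂ) ^ (k + 1) * cexp (-(c * x))
      = (k + 1) * ∫ x in Set.Ioi (0 : ℝ), (x : ℂ) ^ k * cexp (-(c * x)) := by
  have hk := integrableOn_ofReal_pow_mul_cexp_neg_mul hc k
  have hk' := integrableOn_ofReal_pow_mul_cexp_neg_mul hc (k + 1)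
  have hparts := integral_Ioi_of_hasDerivAt_of_tendsto'
    (fun x _ => hasDerivAt_ofReal_pow_succ_mul_cexp_neg_mul k x)
    ((hk.const_mul _).sub (hk'.const_mul _)) (tendsto_ofReal_pow_mul_cexp_neg_mul_atTop hc (k + 1))
  rw [integral_sub (hk.const_mul _) (hk'.const_mul _), integral_const_mul,
    integral_const_mul] at hparts
  simp at hparts
  linear_combination -hparts

lemma integral_ofReal_pow_mul_cexp_neg_mul (hc : 0 < c.re) (k : ℕ) :
    ∫ x in Set.Ioi (0 : ℝ), (x : ℂ) ^ k * cexp (-(c * x)) = k.factorial / c ^ (k + 1) := by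
  have hc0 : c ≠ 0 := fun h => by simp [h] at hc
  induction k with
  | zero =>
    simpa [neg_mul, neg_div] using integral_exp_mul_complex_Ioi (a := -c) (by simpa using hc) 0
  | succ k ih =>
    rw [← mul_right_inj' hc0, integral_ofReal_pow_succ_mul_cexp_neg_mul hc, ih]
    field_simp
    push_cast [Nat.factorial_succ]
    ring

end Moments

lemma sum_choose_mul_pow_div_pow {K : Type*} [Field K] {c : K} (hc : c ≠ 0) (a : K) (m : ℕ) :
    ∑ k ∈ range (m + 1), (m.choose k : K) * a ^ k / c ^ (k + 1) = (c + a) ^ m / c ^ (m + 1) := by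
  rw [add_comm c, add_pow, sum_div]
  refine sum_congr rfl fun k hk => ?_
  have hkm : k ≤ m := Nat.lt_succ_iff.mp (mem_range.mp hk)
  rw [show m + 1 = (m - k) + (k + 1) by omega, pow_add]
  field_simp
  ring

section Laplace

variable {c : ℂ}

lemma ofReal_lagPoly_mul_cexp_eq_sum (m : ℕ) (s x : ℝ) :
    (lagPoly m (s * x) : ℂ) * cexp (-(c * x))
      = ∑ k ∈ range (m + 1),
          (m.choose k : ℂ) * (-s) ^ k / k.factorial * ((x : ℂ) ^ k * cexp (-(c * x))) := by
  simp only [lagPoly]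
  push_cast
  rw [sum_mul]
  refine sum_congr rfl fun k _ => ?_
  ring

lemma integrableOn_ofReal_lagPoly_mul_cexp (hc : 0 < c.re) (m : ℕ) (s : ℝ) :
    IntegrableOn (fun x : ℝ => (lagPoly m (s * x) : ℂ) * cexp (-(c * x))) (Set.Ioi 0) := by
  simp only [ofReal_lagPoly_mul_cexp_eq_sum]
  exact integrable_finsetSum _ fun k _ =>
    (integrableOn_ofReal_pow_mul_cexp_neg_mul hc k).const_mul _

lemma integral_ofReal_lagPoly_mul_cexp (hc : 0 < c.re) (m : ℕ) (s : ℝ) :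
    ∫ x in Set.Ioi (0 : ℝ), (lagPoly m (s * x) : ℂ) * cexp (-(c * x))
      = (c - s) ^ m / c ^ (m + 1) := by
  have hc0 : c ≠ 0 := fun h => by simp [h] at hc
  simp only [ofReal_lagPoly_mul_cexp_eq_sum]
  rw [integral_finsetSum _ fun k _ =>
    (integrableOn_ofReal_pow_mul_cexp_neg_mul hc k).const_mul _, sub_eq_add_neg,
    ← sum_choose_mul_pow_div_pow hc0]
  refine sum_congr rfl fun k _ => ?_
  have hk : (k.factorial : ℂ) ≠ 0 := Nat.cast_ne_zero.mpr k.factorial_ne_zero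
  rw [integral_const_mul, integral_ofReal_pow_mul_cexp_neg_mul hc]
  field_simp

end Laplace

/-- The Fourier-type integral `√2 ∫_0^∞ e^{−2ω} L_m(2ω) e^{2iωt} dω` converges and
equals the complex-valued Cauchy–Laguerre function `−(1/√2)(it)^m/(it−1)^{m+1}`. -/
theorem cauchyLag_integral_formula (m : ℕ) (t : ℝ) :
    IntegrableOn
        (fun ω : ℝ =>
          (Real.exp (-(2 * ω)) * lagPoly m (2 * ω) : ℂ) * Complex.exp (2 * Complex.I * ω * t))
        (Set.Ioi (0 : ℝ)) ∧
      (Real.sqrt 2 : ℂ) *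
          ∫ ω in Set.Ioi (0 : ℝ),
            (Real.exp (-(2 * ω)) * lagPoly m (2 * ω) : ℂ) * Complex.exp (2 * Complex.I * ω * t) =
        -(1 / (Real.sqrt 2 : ℂ)) * (Complex.I * t) ^ m / (Complex.I * t - 1) ^ (m + 1) := by
  set c : ℂ := -2 * (I * t - 1) with hc_def
  have hc : 0 < c.re := by simp [hc_def]
  have hintegrand : (fun ω : ℝ =>
      (Real.exp (-(2 * ω)) * lagPoly m (2 * ω) : ℂ) * Complex.exp (2 * Complex.I * ω * t))
      = fun ω : ℝ => (lagPoly m (2 * ω) : ℂ) * cexp (-(c * ω)) := by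
    funext ω
    rw [mul_comm (rexp _ : ℂ), mul_assoc, ofReal_exp, ← Complex.exp_add, hc_def]
    congr 2
    push_cast
    ring
  rw [hintegrand]
  refine ⟨integrableOn_ofReal_lagPoly_mul_cexp hc m 2, ?_⟩
  have hw : I * (t : ℂ) - 1 ≠ 0 := fun h => by simpa using congrArg re h
  have hsqrt : (Real.sqrt 2 : ℂ) ^ 2 = 2 := by norm_cast; simp
  have hquot : (-2 * (I * t)) ^ m / (-2 * (I * t - 1)) ^ (m + 1)
      = -(1 / 2) * ((I * t) ^ m / (I * (t : ℂ) - 1) ^ (m + 1)) := by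
    rw [mul_pow (-2 : ℂ), mul_pow (-2 : ℂ), pow_succ (-2 : ℂ)]
    field_simp
  rw [integral_ofReal_lagPoly_mul_cexp hc, hc_def,
    show -2 * (I * t - 1) - (2 : ℝ) = -2 * (I * t) by push_cast; ring, hquot]
  field_simp
  linear_combination -(I * (t : ℂ)) ^ m * hsqrt
end
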